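/- P = ∏_{n∈ℕ} ℤ binds itself; that is, every homomorphism from P to a free abelian group has image of finite rank. -/

import Mathlib

/-!
A homomorphism `g : ℤ^ℕ → ℤ` kills the sequences vanishing below some `N` (Specker): otherwise
pick `xₙ` vanishing below `n` with `g xₙ > 0` and fast-growing weights `Dₙ`, each dividing the
next. The series `∑ Dₙ xₙ` is coordinatewise finite and differs from its `N`-th partial sum by a
multiple of `D_N`, so its image under `g` is congruent to every partial sum `s_N` modulo `D_N`;
as `0 ≤ 2 s_N < D_N` and `D_N → ∞`, it would equal every `s_N`, yet these strictly increase.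

For `f : ℤ^ℕ → ⊕_ι ℤ` the same series, built along coordinates `iₙ` that are fresh for the earlier
`f xₖ`, shows that `f` maps some tail into finitely many coordinates; on each of them `f` is
Specker's case, so `f` kills a tail and factors through `ℤ^N`.
-/

open Finset

namespace BaerSpecker

def tail (R : Type*) [Semiring R] (N : ℕ) : Submodule R (ℕ → R) :=
  LinearMap.ker (LinearMap.funLeft R R (Fin.val : Fin N → ℕ))

theorem mem_tail {R : Type*} [Semiring R] {N : ℕ} {x : ℕ → R} :
    x ∈ tail R N ↔ ∀ m < N, x m = 0 := by
  simp only [tail, LinearMap.mem_ker, funext_iff, LinearMap.funLeft_apply, Pi.zero_apply]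
  exact ⟨fun h m hm => h ⟨m, hm⟩, fun h m => h m m.isLt⟩

theorem tail_antitone {R : Type*} [Semiring R] : Antitone (tail R) := fun _ _ hNM _ hx =>
  mem_tail.mpr fun m hm => mem_tail.mp hx m (hm.trans_le hNM)

theorem finite_range_of_tail_le_ker {R M : Type*} [Ring R] [AddCommGroup M] [Module R M] {N : ℕ}
    (f : (ℕ → R) →ₗ[R] M) (h : tail R N ≤ LinearMap.ker f) :
    Module.Finite R (LinearMap.range f) := by
  have hπ := LinearMap.funLeft_surjective_of_injective R R _ (Fin.val_injective (n := N))
  have : Module.Finite R ((ℕ → R) ⧸ tail R N) :=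
    Module.Finite.equiv (LinearMap.quotKerEquivOfSurjective _ hπ).symm
  rw [← Submodule.range_liftQ _ f h]
  infer_instance

/-- When `x n ∈ tail R n` for every `n`, this is the coordinatewise finite sum `∑ₙ c n • x n`. -/
def tailSeries {R : Type*} [Semiring R] (c : ℕ → R) (x : ℕ → ℕ → R) : ℕ → R :=
  fun m => ∑ n ∈ range (m + 1), c n * x n m

theorem exists_tailSeries_eq {R : Type*} [CommSemiring R] {c : ℕ → R} {x : ℕ → ℕ → R}
    (hx : ∀ n, x n ∈ tail R n) {d : R} {N : ℕ} (hc : ∀ n, N ≤ n → d ∣ c n) :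
    ∃ w, tailSeries c x = ∑ n ∈ range N, c n • x n + d • w := by
  have : ∀ n, ∃ q, N ≤ n → c n = d * q := fun n => by
    by_cases hn : N ≤ n
    · obtain ⟨q, hq⟩ := hc n hn
      exact ⟨q, fun _ => hq⟩
    · exact ⟨0, fun h => absurd h hn⟩
  choose q hq using this
  refine ⟨fun m => ∑ j ∈ range (m + 1), q (N + j) * x (N + j) m, funext fun m => ?_⟩
  have hsum : ∑ n ∈ range (m + 1), c n * x n m = ∑ n ∈ range (N + (m + 1)), c n * x n m := by
    refine sum_subset (range_subset_range.mpr (by omega)) fun n _ hn => ?_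
    rw [mem_tail.mp (hx n) m (by simpa using hn), mul_zero]
  simp only [tailSeries, Pi.add_apply, Finset.sum_apply, Pi.smul_apply, smul_eq_mul]
  rw [hsum, sum_range_add, mul_sum]
  refine congrArg _ (sum_congr rfl fun j _ => ?_)
  rw [hq (N + j) (by omega), mul_assoc]

theorem exists_map_tailSeries_eq {A : Type*} [AddCommGroup A] (g : (ℕ → ℤ) →+ A) {c : ℕ → ℤ}
    {x : ℕ → ℕ → ℤ} (hx : ∀ n, x n ∈ tail ℤ n) {d : ℤ} {N : ℕ} (hc : ∀ n, N ≤ n → d ∣ c n) :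
    ∃ w, g (tailSeries c x) = ∑ n ∈ range N, c n • g (x n) + d • g w := by
  obtain ⟨w, hw⟩ := exists_tailSeries_eq hx hc
  exact ⟨w, by simp only [hw, map_add, map_sum, map_zsmul]⟩

theorem exists_forall_mem_tail_map_eq_zero (g : (ℕ → ℤ) →+ ℤ) :
    ∃ N, ∀ x ∈ tail ℤ N, g x = 0 := by
  by_contra! h
  have hpos : ∀ N, ∃ x ∈ tail ℤ N, 0 < g x := fun N => by
    obtain ⟨x, hx, hgx⟩ := h N
    rcases hgx.lt_or_gt with hneg | hpos
    · exact ⟨-x, neg_mem hx, by simpa using hneg⟩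
    · exact ⟨x, hx, hpos⟩
  choose x hx hgx using hpos
  set D : ℕ → ℤ := fun N => ∏ n ∈ range N, 3 * g (x n) with hD
  set s : ℕ → ℤ := fun N => ∑ n ∈ range N, D n * g (x n) with hs
  have hD_pos : ∀ N, 0 < D N := fun N => prod_pos fun n _ => by linarith [hgx n]
  have hs_succ : ∀ N, s N + 1 ≤ s (N + 1) := fun N => by
    simp only [hs, sum_range_succ]
    nlinarith [hD_pos N, hgx N]
  have hs_ge : ∀ N : ℕ, (N : ℤ) ≤ s N := fun N => by
    induction N with
    | zero => simp [hs]
    | succ N ih => push_cast; linarith [hs_succ N]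
  have hs_lt : ∀ N, 2 * s N < D N := fun N => by
    induction N with
    | zero => simp [hs, hD]
    | succ N ih =>
      simp only [hs, hD, sum_range_succ, prod_range_succ] at ih ⊢
      nlinarith [hD_pos N, hgx N]
  have hcong : ∀ N, D N ∣ g (tailSeries D x) - s N := fun N => by
    obtain ⟨w, hw⟩ := exists_map_tailSeries_eq g hx (c := D) (d := D N) (N := N)
      fun n hn => prod_dvd_prod_of_subset _ _ _ (range_subset_range.mpr hn)
    rw [hw, show ∑ n ∈ range N, D n • g (x n) = s N from rfl, add_sub_cancel_left, smul_eq_mul]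
    exact dvd_mul_right _ _
  set a := g (tailSeries D x)
  have ha : ∀ N : ℕ, |a| ≤ N → a = s N := fun N haN =>
    sub_eq_zero.mp <| Int.eq_zero_of_abs_lt_dvd (hcong N) <| by
      have hsN := hs_ge N
      linarith [abs_sub a (s N), abs_of_nonneg ((Nat.cast_nonneg' N).trans hsN), hs_lt N]
  have h₁ := ha a.natAbs (Int.natCast_natAbs a).ge
  have h₂ := ha (a.natAbs + 1) (by push_cast; linarith [Int.natCast_natAbs a])
  linarith [hs_succ a.natAbs]

theorem exists_lt_map_apply_ne_zero {ι : Type*} (f : (ℕ → ℤ) →+ (ι →₀ ℤ)) {x : ℕ → ℕ → ℤ}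
    (hx : ∀ n, x n ∈ tail ℤ n) (i : ℕ → ι) (hdiag : ∀ n, f (x n) (i n) ≠ 0) :
    ∃ k n, k < n ∧ f (x k) (i n) ≠ 0 := by
  by_contra! htri
  have hi : Function.Injective i := fun k n hkn => by
    by_contra hne
    rcases Nat.lt_or_gt_of_ne hne with h | h
    · exact hdiag k (hkn ▸ htri k n h)
    · exact hdiag n (hkn ▸ htri n k h)
  -- The coordinate `i n` of `f (∑ D k • x k)` is `D n • v n` modulo `D (n + 1) = 2 |v n| D n`,
  -- where `v n = f (x n) (i n)`, so it cannot vanish; but all but finitely many coordinates do.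
  set v : ℕ → ℤ := fun n => f (x n) (i n)
  set D : ℕ → ℤ := fun N => ∏ n ∈ range N, 2 * |v n|
  have hD_ne : ∀ N, D N ≠ 0 := fun N => prod_ne_zero_iff.mpr fun n _ => by
    simpa using hdiag n
  obtain ⟨n, hn⟩ : ∃ n, f (tailSeries D x) (i n) = 0 := by
    by_contra! hy
    have : Finite ℕ := Finite.of_injective (β := (f (tailSeries D x)).support)
      (fun n => ⟨i n, Finsupp.mem_support_iff.mpr (hy n)⟩) fun k n h => hi (congrArg Subtype.val h)
    exact not_finite ℕ
  obtain ⟨w, hw⟩ := exists_map_tailSeries_eq f hx (c := D) (d := D (n + 1)) (N := n + 1)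
    fun k hk => prod_dvd_prod_of_subset _ _ _ (range_subset_range.mpr hk)
  have hyn : f (tailSeries D x) (i n) = D n * v n + D (n + 1) * f w (i n) := by
    rw [hw, Finsupp.add_apply, Finsupp.finsetSum_apply, sum_range_succ,
      sum_eq_zero fun k hk => by rw [Finsupp.smul_apply, htri k n (mem_range.mp hk), smul_zero]]
    simp [v]
  rw [hn, show D (n + 1) = D n * (2 * |v n|) from prod_range_succ _ _] at hyn
  have hvn : 2 * |v n| ∣ v n := ⟨-f w (i n), mul_left_cancel₀ (hD_ne n) (by linarith)⟩
  have hv_pos : 0 < |v n| := abs_pos.mpr (hdiag n)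
  exact hdiag n (Int.eq_zero_of_abs_lt_dvd hvn (by linarith))

theorem exists_forall_mem_tail_support_subset {ι : Type*} (f : (ℕ → ℤ) →+ (ι →₀ ℤ)) :
    ∃ (G : Finset ι) (N : ℕ), ∀ x ∈ tail ℤ N, (f x).support ⊆ G := by
  classical
  by_contra! H
  simp only [not_subset] at H
  choose X hX i hi hiG using H
  -- `G n` collects the supports of the earlier `f (x k)`, so that each `i n` is a fresh coordinate.
  let G : ℕ → Finset ι := fun n => Nat.rec ∅ (fun k Gk => Gk ∪ (f (X Gk k)).support) n
  have hG_mono : Monotone G := monotone_nat_of_le_succ fun _ => subset_union_left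
  obtain ⟨k, n, hkn, hne⟩ := exists_lt_map_apply_ne_zero f (x := fun n => X (G n) n)
    (fun n => hX _ n) (fun n => i (G n) n) fun n => Finsupp.mem_support_iff.mp (hi _ n)
  exact hiG (G n) n (hG_mono hkn (subset_union_right (Finsupp.mem_support_iff.mpr hne)))

theorem exists_forall_mem_tail_map_eq_zero_finsupp {ι : Type*} (f : (ℕ → ℤ) →+ (ι →₀ ℤ)) :
    ∃ N, ∀ x ∈ tail ℤ N, f x = 0 := by
  classical
  obtain ⟨G, N, hG⟩ := exists_forall_mem_tail_support_subset f
  choose Nc hNc using fun j : ι =>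
    exists_forall_mem_tail_map_eq_zero ((Finsupp.applyAddHom j).comp f)
  refine ⟨max N (G.sup Nc), fun x hx => Finsupp.ext fun j => ?_⟩
  by_cases hj : j ∈ G
  · exact hNc j x (tail_antitone ((le_sup hj).trans (le_max_right _ _)) hx)
  · exact Finsupp.notMem_support_iff.mp fun hmem =>
      hj (hG x (tail_antitone (le_max_left _ _) hx) hmem)

end BaerSpecker

open Cardinal

theorem stmt_10.{u} : ∀ (ι : Type u) (f : (ℕ → ℤ) →+ (ι →₀ ℤ)),
    Module.rank ℤ f.range < ℵ₀ := by
  intro ι f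
  obtain ⟨N, hN⟩ := BaerSpecker.exists_forall_mem_tail_map_eq_zero_finsupp f
  have : Module.Finite ℤ f.range :=
    BaerSpecker.finite_range_of_tail_le_ker f.toIntLinearMap fun x hx => hN x hx
  exact Module.rank_lt_aleph0 ℤ f.range
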